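/- arXiv:1406.0378 — 6 statements merged into one kernel-verified Lean document; each statement's English description precedes it below -/
import Mathlib

section
/- For every natural number m ≥ 3, the connective eccentric index of the m-sided prism Π_m equals 12m/(m+2) if m is even, and 12m/(m+1) if m is odd. -/
/-! Distances in a box product add up, so the eccentricity of every vertex of the prism is
`⌊m/2⌋ + 1`: half-way round the cycle, plus one step along the rung. The prism is 3-regular
on `2m` vertices, hence `C^ξ(Π_m) = 6m / (⌊m/2⌋ + 1)`. -/

/-- The eccentricity of a vertex `v` in a finite graph `G`:
the maximum distance from `v` to any other vertex. -/
noncomputable def eccentricity {V : Type*} [Fintype V] (G : SimpleGraph V) (v : V) : ℕ :=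
  Finset.univ.sup fun u => G.dist v u

/-- The connective eccentric index `C^ξ(G) = ∑_v deg(v)/ε(v)`, as a rational number. -/
noncomputable def connEccIndex {V : Type*} [Fintype V] (G : SimpleGraph V) : ℚ :=
  letI := Classical.decRel G.Adj
  ∑ v : V, (G.degree v : ℚ) / (eccentricity G v)

/-- The `m`-sided prism: the box product of the cycle `C_m` with `K_2`. -/
def prism (m : ℕ) : SimpleGraph (Fin m × Fin 2) :=
  SimpleGraph.boxProd (SimpleGraph.cycleGraph m) (⊤ : SimpleGraph (Fin 2))

open Finset Fin.CommRing

theorem Fin.val_sub_add_val_eq_or {m : ℕ} (a b : Fin m) :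
    (a - b).val + b.val = a.val ∨ (a - b).val + b.val = a.val + m := by
  rcases le_or_gt b a with h | h
  · left
    rw [Fin.coe_sub_iff_le.mpr h]
    exact Nat.sub_add_cancel h
  · right
    rw [Fin.coe_sub_iff_lt.mpr h]
    have := b.isLt
    have : a.val < b.val := h
    omega

namespace SimpleGraph

section Metric

variable {V : Type*} {G : SimpleGraph V}

theorem le_add_dist_of_forall_adj {f : V → ℕ} (hf : ∀ a b, G.Adj a b → f b ≤ f a + 1)
    {u v : V} (h : G.Reachable u v) : f v ≤ f u + G.dist u v := by
  obtain ⟨w, hw⟩ := h.exists_walk_length_eq_dist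
  rw [← hw]
  clear hw h
  induction w with
  | nil => simp
  | cons hadj w ih =>
    have := hf _ _ hadj
    rw [Walk.length_cons]
    omega

theorem eccentricity_top [Fintype V] [Nontrivial V] (v : V) :
    eccentricity (⊤ : SimpleGraph V) v = 1 := by
  refine le_antisymm (Finset.sup_le fun w _ => ?_) ?_
  · classical
    rw [dist_top]
    split <;> simp
  · obtain ⟨w, hw⟩ := exists_ne v
    rw [← dist_top_of_ne hw.symm]
    exact Finset.le_sup (f := (⊤ : SimpleGraph V).dist v) (mem_univ w)

theorem connEccIndex_eq_of_isRegularOfDegree [Fintype V] [G.LocallyFinite] {d e : ℕ}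
    (hd : G.IsRegularOfDegree d) (he : ∀ v, eccentricity G v = e) :
    connEccIndex G = Fintype.card V * d / e := by
  have hdeg : ∀ v [Fintype (G.neighborSet v)], G.degree v = d := fun v _ => by
    convert hd v
  simp only [connEccIndex, hdeg, he, sum_const, card_univ, nsmul_eq_mul]
  ring

end Metric

section BoxProd

variable {α β : Type*} {G : SimpleGraph α} {H : SimpleGraph β}

theorem Connected.dist_boxProd (hG : G.Connected) (hH : H.Connected) (x y : α × β) :
    (G □ H).dist x y = G.dist x.1 y.1 + H.dist x.2 y.2 := by
  apply Nat.cast_injective (R := ℕ∞)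
  push_cast
  rw [((hG.boxProd hH).preconnected x y).coe_dist_eq_edist,
    (hG.preconnected _ _).coe_dist_eq_edist, (hH.preconnected _ _).coe_dist_eq_edist,
    edist_boxProd]

theorem eccentricity_boxProd [Fintype α] [Fintype β] (hG : G.Connected) (hH : H.Connected)
    (x : α × β) : eccentricity (G □ H) x = eccentricity G x.1 + eccentricity H x.2 := by
  have := hG.nonempty
  have := hH.nonempty
  simp only [eccentricity, hG.dist_boxProd hH, ← univ_product_univ]
  exact (sup_add_sup univ_nonempty univ_nonempty _ _).symm

theorem IsRegularOfDegree.boxProd [G.LocallyFinite] [H.LocallyFinite] {d e : ℕ}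
    (hG : G.IsRegularOfDegree d) (hH : H.IsRegularOfDegree e) :
    (G □ H).IsRegularOfDegree (d + e) := fun x => by
  rw [degree_boxProd, hG, hH]

end BoxProd

section Cycle

variable {n : ℕ}

theorem cycleGraph_dist_add_natCast_le (u : Fin (n + 2)) (k : ℕ) :
    (cycleGraph (n + 2)).dist u (u + k) ≤ k := by
  induction k with
  | zero => simp
  | succ k ih =>
    have hadj : (cycleGraph (n + 2)).Adj (u + k) (u + (k + 1 : ℕ)) :=
      cycleGraph_adj.mpr (Or.inr (by push_cast; ring))
    calc (cycleGraph (n + 2)).dist u (u + (k + 1 : ℕ))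
        ≤ (cycleGraph (n + 2)).dist u (u + k)
          + (cycleGraph (n + 2)).dist (u + k) (u + (k + 1 : ℕ)) :=
          cycleGraph_connected.dist_triangle
      _ ≤ k + 1 := by rw [dist_eq_one_iff_adj.mpr hadj]; omega

theorem cycleGraph_dist_le_val_sub (u v : Fin (n + 2)) :
    (cycleGraph (n + 2)).dist u v ≤ (v - u).val := by
  simpa using cycleGraph_dist_add_natCast_le u (v - u).val

theorem min_val_sub_le_add_one_of_cycleGraph_adj (u : Fin (n + 2)) {a b : Fin (n + 2)}
    (hab : (cycleGraph (n + 2)).Adj a b) :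
    min (b - u).val (u - b).val ≤ min (a - u).val (u - a).val + 1 := by
  have := cycleGraph_adj'.mp hab
  have := Fin.val_sub_add_val_eq_or a b
  have := Fin.val_sub_add_val_eq_or b a
  have := Fin.val_sub_add_val_eq_or a u
  have := Fin.val_sub_add_val_eq_or u a
  have := Fin.val_sub_add_val_eq_or b u
  have := Fin.val_sub_add_val_eq_or u b
  have := a.isLt; have := b.isLt; have := u.isLt
  have := (a - u).isLt; have := (u - a).isLt; have := (b - u).isLt; have := (u - b).isLt
  omega

theorem cycleGraph_dist_eq (u v : Fin (n + 2)) :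
    (cycleGraph (n + 2)).dist u v = min (v - u).val (u - v).val := by
  refine le_antisymm (le_min (cycleGraph_dist_le_val_sub u v) ?_) ?_
  · rw [dist_comm]
    exact cycleGraph_dist_le_val_sub v u
  · simpa using le_add_dist_of_forall_adj (fun _ _ => min_val_sub_le_add_one_of_cycleGraph_adj u)
      (cycleGraph_connected.preconnected u v)

theorem eccentricity_cycleGraph (u : Fin (n + 2)) :
    eccentricity (cycleGraph (n + 2)) u = (n + 2) / 2 := by
  refine le_antisymm (Finset.sup_le fun v _ => ?_) ?_
  · have := Fin.val_sub_add_val_eq_or v u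
    have := Fin.val_sub_add_val_eq_or u v
    have := (v - u).isLt; have := (u - v).isLt
    rw [cycleGraph_dist_eq]
    omega
  · let v := u + ⟨(n + 2) / 2, by omega⟩
    have hv : (v - u).val = (n + 2) / 2 := by simp [v]
    have := Fin.val_sub_add_val_eq_or v u
    have := Fin.val_sub_add_val_eq_or u v
    have := (u - v).isLt
    calc (n + 2) / 2 = (cycleGraph (n + 2)).dist u v := by rw [cycleGraph_dist_eq]; omega
      _ ≤ eccentricity (cycleGraph (n + 2)) u :=
        Finset.le_sup (f := (cycleGraph (n + 2)).dist u) (mem_univ v)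

end Cycle

end SimpleGraph

open SimpleGraph

instance (m : ℕ) : (prism m).LocallyFinite :=
  inferInstanceAs (cycleGraph m □ ⊤).LocallyFinite

theorem isRegularOfDegree_prism {m : ℕ} (hm : 3 ≤ m) : (prism m).IsRegularOfDegree 3 := by
  obtain ⟨n, rfl⟩ : ∃ n, m = n + 3 := ⟨m - 3, by omega⟩
  exact IsRegularOfDegree.boxProd (d := 2) (e := 1) (fun _ => cycleGraph_degree_three_le)
    (by simpa using IsRegularOfDegree.top (V := Fin 2))

theorem eccentricity_prism {m : ℕ} (hm : 2 ≤ m) (x : Fin m × Fin 2) :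
    eccentricity (prism m) x = m / 2 + 1 := by
  obtain ⟨n, rfl⟩ : ∃ n, m = n + 2 := ⟨m - 2, by omega⟩
  rw [prism, eccentricity_boxProd cycleGraph_connected connected_top, eccentricity_cycleGraph,
    eccentricity_top]

theorem connEccIndex_prism_eq {m : ℕ} (hm : 3 ≤ m) :
    connEccIndex (prism m) = 6 * m / (m / 2 + 1 : ℕ) := by
  rw [connEccIndex_eq_of_isRegularOfDegree (isRegularOfDegree_prism hm)
    (eccentricity_prism (by omega)), Fintype.card_prod, Fintype.card_fin, Fintype.card_fin]
  push_cast
  ring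

/-- The connective eccentric index of the `m`-sided prism equals
`12m/(m+2)` if `m` is even and `12m/(m+1)` if `m` is odd. -/
theorem connEccIndex_prism (m : ℕ) (hm : 3 ≤ m) :
    (Even m → connEccIndex (prism m) = (12 * m : ℚ) / ((m : ℚ) + 2)) ∧
    (Odd m → connEccIndex (prism m) = (12 * m : ℚ) / ((m : ℚ) + 1)) := by
  rw [connEccIndex_prism_eq hm]
  constructor
  · rintro ⟨k, rfl⟩
    rw [show (k + k) / 2 = k by omega]
    push_cast
    field_simp
    ring
  · rintro ⟨k, rfl⟩
    rw [show (2 * k + 1) / 2 = k by omega]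
    push_cast
    field_simp
    ring
end

section
/- For every natural number m ≥ 3, the connective eccentric index of the m-sided antiprism A_m equals 16 if m is even, and 16m/(m+1) if m is odd. -/
/-- The `m`-sided antiprism: the circulant graph on `ℤ/2mℤ` with connection set
`{1, 2, -1, -2}`. -/
def antiprism (m : ℕ) : SimpleGraph (ZMod (2 * m)) :=
  SimpleGraph.circulantGraph ({1, 2, -1, -2} : Set (ZMod (2 * m)))

open SimpleGraph

section Aux

variable (m : ℕ) [NeZero (2 * m)]

lemma zmod_ne_zero (hm : 3 ≤ m) {k : ℕ} (h0 : 0 < k) (h1 : k < 2 * m) :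
    (k : ZMod (2 * m)) ≠ 0 := by
  intro h
  rw [ZMod.natCast_eq_zero_iff] at h
  exact absurd (Nat.le_of_dvd h0 h) (by omega)

lemma antiprism_adj (hm : 3 ≤ m) {v w : ZMod (2 * m)} :
    (antiprism m).Adj v w ↔
      v ≠ w ∧ (w - v = 1 ∨ w - v = 2 ∨ w - v = -1 ∨ w - v = -2) := by
  show (SimpleGraph.fromRel _).Adj v w ↔ _
  rw [SimpleGraph.fromRel_adj]
  constructor
  · rintro ⟨hne, h | h⟩
    · refine ⟨hne, ?_⟩
      simp only [Set.mem_insert_iff, Set.mem_singleton_iff] at h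
      rcases h with h | h | h | h
      · exact Or.inr (Or.inr (Or.inl (by linear_combination -h)))
      · exact Or.inr (Or.inr (Or.inr (by linear_combination -h)))
      · exact Or.inl (by linear_combination -h)
      · exact Or.inr (Or.inl (by linear_combination -h))
    · refine ⟨hne, ?_⟩
      simpa only [Set.mem_insert_iff, Set.mem_singleton_iff] using h
  · rintro ⟨hne, h⟩
    refine ⟨hne, Or.inr ?_⟩
    simpa only [Set.mem_insert_iff, Set.mem_singleton_iff] using h

lemma adj_add_one (hm : 3 ≤ m) (v : ZMod (2 * m)) : (antiprism m).Adj v (v + 1) := by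
  rw [antiprism_adj m hm]
  refine ⟨fun h => ?_, Or.inl (by ring)⟩
  have h1 : ((1 : ℕ) : ZMod (2 * m)) ≠ 0 := zmod_ne_zero m hm one_pos (by omega)
  apply h1
  push_cast
  linear_combination -h

lemma adj_add_two (hm : 3 ≤ m) (v : ZMod (2 * m)) : (antiprism m).Adj v (v + 2) := by
  rw [antiprism_adj m hm]
  refine ⟨fun h => ?_, Or.inr (Or.inl (by ring))⟩
  have h1 : ((2 : ℕ) : ZMod (2 * m)) ≠ 0 := zmod_ne_zero m hm two_pos (by omega)
  apply h1
  push_cast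
  linear_combination -h

lemma exists_walk (hm : 3 ≤ m) : ∀ j, j ≤ m → ∀ v : ZMod (2 * m),
    ∃ p : (antiprism m).Walk v (v + (j : ZMod (2 * m))), p.length ≤ (j + 1) / 2 := by
  intro j
  induction j using Nat.strong_induction_on with
  | _ j ih =>
    match j with
    | 0 =>
      intro _ v
      exact ⟨Walk.nil.copy rfl (by push_cast; ring), by simp⟩
    | 1 =>
      intro _ v
      refine ⟨(Walk.cons (adj_add_one m hm v) Walk.nil).copy rfl (by push_cast; ring), ?_⟩
      simp
    | (k + 2) =>
      intro hj v
      obtain ⟨p, hp⟩ := ih k (by omega) (by omega) (v + 2)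
      refine ⟨(Walk.cons (adj_add_two m hm v) p).copy rfl (by push_cast; ring), ?_⟩
      rw [Walk.length_copy, Walk.length_cons]
      omega

lemma dist_ub (hm : 3 ≤ m) (v u : ZMod (2 * m)) :
    (antiprism m).dist v u ≤ (m + 1) / 2 := by
  have key : ∀ (w x : ZMod (2 * m)), (x - w).val ≤ m →
      (antiprism m).dist w x ≤ (m + 1) / 2 := by
    intro w x hval
    obtain ⟨p, hp⟩ := exists_walk m hm (x - w).val hval w
    have hx : w + (((x - w).val : ℕ) : ZMod (2 * m)) = x := by
      rw [ZMod.natCast_rightInverse (x - w)]; ring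
    calc (antiprism m).dist w x ≤ (p.copy rfl hx).length := SimpleGraph.dist_le _
      _ ≤ ((x - w).val + 1) / 2 := by rw [Walk.length_copy]; exact hp
      _ ≤ (m + 1) / 2 := by omega
  by_cases h : (u - v).val ≤ m
  · exact key v u h
  · rw [SimpleGraph.dist_comm]
    apply key u v
    have hne : u - v ≠ 0 := by
      intro h0
      rw [h0] at h
      simp at h
    have : (v - u).val = 2 * m - (u - v).val := by
      have := ZMod.neg_val (u - v)
      rw [if_neg hne] at this
      rw [← this]
      congr 1
      ring
    have hlt : (u - v).val < 2 * m := ZMod.val_lt _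
    omega

lemma walk_bound (hm : 3 ≤ m) {v u : ZMod (2 * m)} (p : (antiprism m).Walk v u) :
    ∃ s : ℤ, |s| ≤ 2 * p.length ∧ (s : ZMod (2 * m)) = u - v := by
  induction p with
  | nil => exact ⟨0, by simp, by simp⟩
  | @cons v w u h p ih =>
    obtain ⟨s, hs1, hs2⟩ := ih
    obtain ⟨-, hd⟩ := (antiprism_adj m hm).mp h
    have hD : ∃ d : ℤ, |d| ≤ 2 ∧ (d : ZMod (2 * m)) = w - v := by
      rcases hd with h | h | h | h
      · exact ⟨1, by norm_num, by push_cast; exact h.symm⟩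
      · exact ⟨2, by norm_num, by push_cast; exact h.symm⟩
      · exact ⟨-1, by norm_num, by push_cast; exact h.symm⟩
      · exact ⟨-2, by norm_num, by push_cast; exact h.symm⟩
    obtain ⟨d, hd1, hd2⟩ := hD
    refine ⟨d + s, ?_, ?_⟩
    · rw [Walk.length_cons]
      calc |d + s| ≤ |d| + |s| := abs_add_le _ _
        _ ≤ 2 * (p.length + 1) := by omega
    · push_cast
      rw [hd2, hs2]
      ring

lemma dist_lb (hm : 3 ≤ m) (v : ZMod (2 * m)) :
    (m + 1) / 2 ≤ (antiprism m).dist v (v + (m : ZMod (2 * m))) := by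
  obtain ⟨p0, -⟩ := exists_walk m hm m le_rfl v
  have hr : (antiprism m).Reachable v (v + (m : ZMod (2 * m))) := ⟨p0⟩
  obtain ⟨p, hp⟩ := hr.exists_walk_length_eq_dist
  obtain ⟨s, hs1, hs2⟩ := walk_bound m hm p
  rw [hp] at hs1
  have hsm : ((s - m : ℤ) : ZMod (2 * m)) = 0 := by
    push_cast
    rw [hs2]
    ring
  rw [ZMod.intCast_zmod_eq_zero_iff_dvd] at hsm
  obtain ⟨t, ht⟩ := hsm
  have hms : (m : ℤ) ≤ |s| := by
    push_cast at ht
    rcases le_or_gt 0 t with h | h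
    · refine le_trans ?_ (le_abs_self s)
      nlinarith [ht, mul_nonneg (show (0:ℤ) ≤ 2 * (m:ℤ) by positivity) h]
    · refine le_trans ?_ (neg_le_abs s)
      nlinarith [ht, mul_nonpos_of_nonneg_of_nonpos
        (show (0:ℤ) ≤ 2 * (m:ℤ) by positivity) (show (1:ℤ) + t ≤ 0 by omega)]
  have : (m : ℤ) ≤ 2 * ((antiprism m).dist v (v + (m : ZMod (2 * m)))) := le_trans hms hs1
  have : m ≤ 2 * ((antiprism m).dist v (v + (m : ZMod (2 * m)))) := by exact_mod_cast this
  omega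

lemma ecc_eq (hm : 3 ≤ m) (v : ZMod (2 * m)) :
    eccentricity (antiprism m) v = (m + 1) / 2 := by
  apply le_antisymm
  · exact Finset.sup_le fun u _ => dist_ub m hm v u
  · exact le_trans (dist_lb m hm v) (Finset.le_sup (Finset.mem_univ _))

lemma deg_eq (hm : 3 ≤ m) (v : ZMod (2 * m)) [Fintype ((antiprism m).neighborSet v)] :
    (antiprism m).degree v = 4 := by
  have hset : (antiprism m).neighborFinset v = {v + 1, v + 2, v - 1, v - 2} := by
    ext u
    rw [mem_neighborFinset, antiprism_adj m hm]
    simp only [Finset.mem_insert, Finset.mem_singleton]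
    constructor
    · rintro ⟨-, h | h | h | h⟩
      · exact Or.inl (by linear_combination h)
      · exact Or.inr (Or.inl (by linear_combination h))
      · exact Or.inr (Or.inr (Or.inl (by linear_combination h)))
      · exact Or.inr (Or.inr (Or.inr (by linear_combination h)))
    · have hne : ∀ k : ℕ, 0 < k → k < 2 * m → (k : ZMod (2 * m)) ≠ 0 :=
        fun k a b => zmod_ne_zero m hm a b
      rintro (h | h | h | h) <;> subst h
      · exact ⟨fun h => hne 1 one_pos (by omega) (by push_cast; first | linear_combination h | linear_combination -h | linear_combination 2*h | linear_combination -2*h | linear_combination 3*h | linear_combination -3*h | linear_combination 4*h | linear_combination -4*h),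
          Or.inl (by ring)⟩
      · exact ⟨fun h => hne 2 two_pos (by omega) (by push_cast; first | linear_combination h | linear_combination -h | linear_combination 2*h | linear_combination -2*h | linear_combination 3*h | linear_combination -3*h | linear_combination 4*h | linear_combination -4*h),
          Or.inr (Or.inl (by ring))⟩
      · exact ⟨fun h => hne 1 one_pos (by omega) (by push_cast; first | linear_combination h | linear_combination -h | linear_combination 2*h | linear_combination -2*h | linear_combination 3*h | linear_combination -3*h | linear_combination 4*h | linear_combination -4*h),
          Or.inr (Or.inr (Or.inl (by ring)))⟩
      · exact ⟨fun h => hne 2 two_pos (by omega) (by push_cast; first | linear_combination h | linear_combination -h | linear_combination 2*h | linear_combination -2*h | linear_combination 3*h | linear_combination -3*h | linear_combination 4*h | linear_combination -4*h),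
          Or.inr (Or.inr (Or.inr (by ring)))⟩
  have hne : ∀ k : ℕ, 0 < k → k < 2 * m → (k : ZMod (2 * m)) ≠ 0 :=
    fun k a b => zmod_ne_zero m hm a b
  have d12 : v + 1 ≠ v + 2 := fun h =>
    hne 1 one_pos (by omega) (by push_cast; first | linear_combination h | linear_combination -h | linear_combination 2*h | linear_combination -2*h | linear_combination 3*h | linear_combination -3*h | linear_combination 4*h | linear_combination -4*h)
  have d13 : v + 1 ≠ v - 1 := fun h =>
    hne 2 two_pos (by omega) (by push_cast; first | linear_combination h | linear_combination -h | linear_combination 2*h | linear_combination -2*h | linear_combination 3*h | linear_combination -3*h | linear_combination 4*h | linear_combination -4*h)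
  have d14 : v + 1 ≠ v - 2 := fun h =>
    hne 3 (by norm_num) (by omega) (by push_cast; first | linear_combination h | linear_combination -h | linear_combination 2*h | linear_combination -2*h | linear_combination 3*h | linear_combination -3*h | linear_combination 4*h | linear_combination -4*h)
  have d23 : v + 2 ≠ v - 1 := fun h =>
    hne 3 (by norm_num) (by omega) (by push_cast; first | linear_combination h | linear_combination -h | linear_combination 2*h | linear_combination -2*h | linear_combination 3*h | linear_combination -3*h | linear_combination 4*h | linear_combination -4*h)
  have d24 : v + 2 ≠ v - 2 := fun h =>
    hne 4 (by norm_num) (by omega) (by push_cast; first | linear_combination h | linear_combination -h | linear_combination 2*h | linear_combination -2*h | linear_combination 3*h | linear_combination -3*h | linear_combination 4*h | linear_combination -4*h)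
  have d34 : v - 1 ≠ v - 2 := fun h =>
    hne 1 one_pos (by omega) (by push_cast; first | linear_combination h | linear_combination -h | linear_combination 2*h | linear_combination -2*h | linear_combination 3*h | linear_combination -3*h | linear_combination 4*h | linear_combination -4*h)
  rw [SimpleGraph.degree, hset]
  rw [Finset.card_insert_of_notMem (by simp [d12, d13, d14]),
    Finset.card_insert_of_notMem (by simp [d23, d24]),
    Finset.card_insert_of_notMem (by simp [d34]),
    Finset.card_singleton]

end Aux

/-- The connective eccentric index of the `m`-sided antiprism equals
`16` if `m` is even and `16m/(m+1)` if `m` is odd. -/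
theorem connEccIndex_antiprism (m : ℕ) (hm : 3 ≤ m) [NeZero (2 * m)] :
    (Even m → connEccIndex (antiprism m) = (16 : ℚ)) ∧
    (Odd m → connEccIndex (antiprism m) = (16 * m : ℚ) / ((m : ℚ) + 1)) := by
  have key : connEccIndex (antiprism m)
      = (2 * m : ℚ) * (4 / ((((m + 1) / 2 : ℕ) : ℚ))) := by
    letI := Classical.decRel (antiprism m).Adj
    simp only [connEccIndex]
    have hterm : ∀ v : ZMod (2 * m),
        ((antiprism m).degree v : ℚ) / (eccentricity (antiprism m) v)
          = 4 / ((((m + 1) / 2 : ℕ) : ℚ)) := by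
      intro v
      rw [deg_eq m hm v, ecc_eq m hm v]
      norm_num
    rw [Finset.sum_congr rfl fun v _ => hterm v]
    rw [Finset.sum_const, Finset.card_univ, ZMod.card, nsmul_eq_mul]
    push_cast
    ring
  constructor
  · intro hEven
    obtain ⟨a, ha⟩ := hEven
    have h2 : (m + 1) / 2 = a := by omega
    have ha2 : 2 ≤ a := by omega
    rw [key, h2, ha]
    have : (a : ℚ) ≠ 0 := Nat.cast_ne_zero.mpr (by omega)
    push_cast
    field_simp
    ring
  · intro hOdd
    obtain ⟨a, ha⟩ := hOdd
    have h2 : (m + 1) / 2 = a + 1 := by omega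
    rw [key, h2, ha]
    have : ((a : ℚ) + 1) ≠ 0 := by positivity
    push_cast
    field_simp
    ring
end

section
/- Let G be a finite connected simple graph on n ≥ 2 vertices, and let G* be its double graph: the graph with vertex set V(G) × {0,1} in which (u,a) is adjacent to (v,b) if and only if u is adjacent to v in G. Then C^ξ(G*) = 4·C^ξ(G) − 2(n−1)·‖n−1‖_G, where ‖n−1‖_G is the number of vertices of G having degree n−1 (equivalently, eccentricity one). -/
/-- The number of vertices of `G` whose degree equals `k`. -/
noncomputable def numVerticesOfDegree {V : Type*} [Fintype V] (G : SimpleGraph V) (k : ℕ) : ℕ :=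
  letI := Classical.decRel G.Adj
  (Finset.univ.filter fun v => G.degree v = k).card

/-- The double graph of `G`: vertex set `V(G) × {0,1}`, where `(u,a)` is adjacent to
`(v,b)` iff `u` is adjacent to `v` in `G`. -/
def doubleGraph {V : Type*} (G : SimpleGraph V) : SimpleGraph (V × Fin 2) where
  Adj x y := G.Adj x.1 y.1
  symm := ⟨fun _ _ h => G.symm.symm _ _ h⟩
  loopless := ⟨fun x h => G.loopless.irrefl x.1 h⟩

open SimpleGraph

section DoubleGraph

variable {V : Type*}

lemma SimpleGraph.Reachable.dist_map_le {W : Type*} {G : SimpleGraph V} {G' : SimpleGraph W}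
    (f : G →g G') {u v : V} (h : G.Reachable u v) : G'.dist (f u) (f v) ≤ G.dist u v := by
  obtain ⟨p, hp⟩ := h.exists_walk_length_eq_dist
  simpa [hp] using dist_le (p.map f)

lemma connEccIndex_eq_sum [Fintype V] (G : SimpleGraph V) [DecidableRel G.Adj] :
    connEccIndex G = ∑ v : V, (G.degree v : ℚ) / eccentricity G v := by
  unfold connEccIndex
  congr!

lemma numVerticesOfDegree_eq_card_filter [Fintype V] (G : SimpleGraph V) [DecidableRel G.Adj]
    (k : ℕ) : numVerticesOfDegree G k = (Finset.univ.filter fun v => G.degree v = k).card := by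
  unfold numVerticesOfDegree
  congr!

section Eccentricity

variable [Fintype V] {G : SimpleGraph V}

lemma one_le_eccentricity [Nontrivial V] (hconn : G.Connected) (v : V) :
    1 ≤ eccentricity G v := by
  obtain ⟨u, hu⟩ := exists_ne v
  exact (hconn.pos_dist_of_ne hu.symm).trans_le (Finset.le_sup (Finset.mem_univ u))

lemma eccentricity_eq_one_iff [Nontrivial V] (hconn : G.Connected) (v : V) :
    eccentricity G v = 1 ↔ G.IsUniversal v := by
  constructor
  · intro h u hvu
    rw [← dist_eq_one_iff_adj]
    exact le_antisymm (h ▸ Finset.le_sup (Finset.mem_univ u)) (hconn.pos_dist_of_ne hvu)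
  · intro h
    refine le_antisymm (Finset.sup_le fun u _ => ?_) (one_le_eccentricity hconn v)
    rcases eq_or_ne v u with rfl | hvu
    · simp
    · exact (dist_eq_one_iff_adj.mpr (h hvu)).le

end Eccentricity

namespace doubleGraph

variable (G : SimpleGraph V)

def fstHom : doubleGraph G →g G := ⟨Prod.fst, id⟩

def layerHom (b : Fin 2) : G →g doubleGraph G := ⟨fun v => (v, b), id⟩

lemma degree_eq (v : V) (a : Fin 2) [Fintype ((doubleGraph G).neighborSet (v, a))]
    [Fintype (G.neighborSet v)] :
    (doubleGraph G).degree (v, a) = 2 * G.degree v := by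
  rw [← card_neighborSet_eq_degree, ← card_neighborSet_eq_degree]
  have e : (doubleGraph G).neighborSet (v, a) ≃ G.neighborSet v × Fin 2 :=
    { toFun := fun x => (⟨x.1.1, x.2⟩, x.1.2)
      invFun := fun p => ⟨(p.1.1, p.2), p.1.2⟩
      left_inv := fun _ => rfl
      right_inv := fun _ => rfl }
  rw [Fintype.card_congr e, Fintype.card_prod, Fintype.card_fin, mul_comm]

lemma exists_walk_length_eq {u v : V} (p : G.Walk u v) (hp : ¬p.Nil) (a b : Fin 2) :
    ∃ q : (doubleGraph G).Walk (u, a) (v, b), q.length = p.length := by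
  cases p with
  | nil => exact absurd .nil hp
  | cons h q =>
    exact ⟨.cons (show (doubleGraph G).Adj (u, a) (_, b) from h) (q.map (layerHom G b)),
      congrArg (· + 1) (q.length_map _)⟩

variable {G}

lemma dist_eq_of_ne (hconn : G.Connected) {u v : V} (huv : u ≠ v) (a b : Fin 2) :
    (doubleGraph G).dist (u, a) (v, b) = G.dist u v := by
  obtain ⟨p, hp⟩ := hconn.exists_walk_length_eq_dist u v
  obtain ⟨q, hq⟩ := exists_walk_length_eq G p (Walk.not_nil_of_ne huv) a b
  exact le_antisymm (hp ▸ hq ▸ dist_le q) (Reachable.dist_map_le (fstHom G) ⟨q⟩)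

lemma dist_eq_two_of_adj {v w : V} (hvw : G.Adj v w) {a b : Fin 2} (hab : a ≠ b) :
    (doubleGraph G).dist (v, a) (v, b) = 2 := by
  let p : (doubleGraph G).Walk (v, a) (v, b) :=
    .cons (show (doubleGraph G).Adj (v, a) (w, a) from hvw)
      (.cons (show (doubleGraph G).Adj (w, a) (v, b) from hvw.symm) .nil)
  exact le_antisymm (dist_le p) <|
    Reachable.one_lt_dist_of_ne_of_not_adj ⟨p⟩ (by simpa using hab) (G.loopless.irrefl v)

lemma eccentricity_eq [Fintype V] [Nontrivial V] (hconn : G.Connected) (v : V) (a : Fin 2) :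
    eccentricity (doubleGraph G) (v, a) = max (eccentricity G v) 2 := by
  obtain ⟨w, hvw⟩ := hconn.preconnected.exists_adj_of_nontrivial v
  apply le_antisymm
  · refine Finset.sup_le fun ⟨u, b⟩ _ => ?_
    rcases eq_or_ne v u with rfl | hvu
    · rcases eq_or_ne a b with rfl | hab
      · simp
      · exact (dist_eq_two_of_adj hvw hab).trans_le (le_max_right _ _)
    · rw [dist_eq_of_ne hconn hvu]
      exact le_max_of_le_left (Finset.le_sup (Finset.mem_univ u))
  · refine max_le (Finset.sup_le fun u _ => ?_) ?_
    · rcases eq_or_ne v u with rfl | hvu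
      · simp
      · exact dist_eq_of_ne hconn hvu a a ▸ Finset.le_sup (Finset.mem_univ (u, a))
    · have hne : a ≠ a + 1 := by fin_cases a <;> decide
      exact (dist_eq_two_of_adj hvw hne).symm.trans_le (Finset.le_sup (Finset.mem_univ _))

lemma sum_degree_div_eccentricity [Fintype V] [DecidableRel G.Adj] [Nontrivial V]
    (hconn : G.Connected) (v : V) [∀ x, Fintype ((doubleGraph G).neighborSet x)] :
    ∑ a : Fin 2, ((doubleGraph G).degree (v, a) : ℚ) / eccentricity (doubleGraph G) (v, a) =
      4 * ((G.degree v : ℚ) / eccentricity G v) -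
        if G.degree v = Fintype.card V - 1 then 2 * ((Fintype.card V : ℚ) - 1) else 0 := by
  have huniv : G.degree v = Fintype.card V - 1 ↔ eccentricity G v = 1 := by
    rw [degree_eq_card_sub_one, eccentricity_eq_one_iff hconn]
  simp only [Fin.sum_univ_two, degree_eq, eccentricity_eq hconn, Nat.cast_mul]
  rcases (one_le_eccentricity hconn v).eq_or_lt with h | h
  · have hdeg := huniv.mpr h.symm
    rw [if_pos hdeg, ← h, hdeg, Nat.cast_sub Fintype.card_pos]
    norm_num
    ring
  · have hε : (eccentricity G v : ℚ) ≠ 0 := by positivity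
    rw [if_neg (huniv.not.mpr h.ne'), max_eq_left h]
    field_simp
    ring

end doubleGraph

end DoubleGraph

/-- The connective eccentric index of the double graph:
`C^ξ(G*) = 4 C^ξ(G) − 2(n−1)‖n−1‖_G`. -/
theorem connEccIndex_doubleGraph {V : Type*} [Fintype V] (G : SimpleGraph V)
    (hconn : G.Connected) (n : ℕ) (hcard : Fintype.card V = n) (hn : 2 ≤ n) :
    connEccIndex (doubleGraph G) =
      4 * connEccIndex G - 2 * ((n : ℚ) - 1) * (numVerticesOfDegree G (n - 1) : ℚ) := by
  classical
  have : Nontrivial V := Fintype.one_lt_card_iff_nontrivial.mp (by omega)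
  subst hcard
  rw [connEccIndex_eq_sum, connEccIndex_eq_sum, numVerticesOfDegree_eq_card_filter,
    Fintype.sum_prod_type]
  simp only [doubleGraph.sum_degree_div_eccentricity hconn, Finset.sum_sub_distrib,
    ← Finset.mul_sum, ← Finset.sum_filter, Finset.sum_const, nsmul_eq_mul]
  ring
end

section
/- Let G₁ and G₂ be finite simple graphs on disjoint vertex sets, each having at least two vertices and containing no well-connected vertex. Then the connective eccentric index of the join G₁ + G₂ equals |E(G₁)| + |E(G₂)| + |V(G₁)|·|V(G₂)|. -/
/-- The number of edges of `G`. -/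
noncomputable def numEdges {V : Type*} (G : SimpleGraph V) : ℕ := G.edgeSet.ncard

/-- A vertex is well-connected if it is adjacent to every other vertex. -/
def IsWellConnected {V : Type*} (G : SimpleGraph V) (v : V) : Prop :=
  ∀ u : V, u ≠ v → G.Adj v u

/-- The join `G₁ + G₂` of two graphs on disjoint vertex sets: all edges of `G₁` and of
`G₂`, together with all edges between the two vertex sets. -/
def joinGraph {V W : Type*} (G : SimpleGraph V) (H : SimpleGraph W) :
    SimpleGraph (V ⊕ W) where
  Adj x y :=
    match x, y with
    | .inl a, .inl b => G.Adj a b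
    | .inr a, .inr b => H.Adj a b
    | .inl _, .inr _ => True
    | .inr _, .inl _ => True
  symm := by
    constructor
    intro x y h
    cases x <;> cases y <;> simp_all
    · exact G.symm.symm _ _ h
    · exact H.symm.symm _ _ h
  loopless := by
    constructor
    intro x h
    cases x
    · exact G.loopless.irrefl _ h
    · exact H.loopless.irrefl _ h

/-!
Any two vertices of `G₁ + G₂` are joined by a walk of length at most two through the other
side, while a vertex that is not well-connected in its own graph has a non-neighbour there, so
every vertex of the join has eccentricity exactly two. The index is then half the degree sum,
which is the number of edges of the join.
-/

open Finset SimpleGraph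

section General

theorem numEdges_eq_card_edgeFinset {V : Type*} (G : SimpleGraph V) [Fintype G.edgeSet] :
    numEdges G = #G.edgeFinset := by
  rw [numEdges, ← coe_edgeFinset, Set.ncard_coe_finset]

variable {V : Type*} [Fintype V] (G : SimpleGraph V)

theorem sum_degrees_eq_two_mul_numEdges [DecidableRel G.Adj] :
    ∑ v, G.degree v = 2 * numEdges G := by
  classical
  rw [sum_degrees_eq_twice_card_edges, numEdges_eq_card_edgeFinset]

variable {G}

theorem eccentricity_le_iff {v : V} {n : ℕ} : eccentricity G v ≤ n ↔ ∀ u, G.dist v u ≤ n := by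
  simp [eccentricity]

theorem two_le_eccentricity {v : V} (hreach : ∀ u, G.Reachable v u)
    (hv : ¬ IsWellConnected G v) : 2 ≤ eccentricity G v := by
  obtain ⟨u, hne, hnadj⟩ : ∃ u, u ≠ v ∧ ¬ G.Adj v u := by
    simpa [IsWellConnected] using hv
  have hpos : 0 < G.dist v u := (hreach u).pos_dist_of_ne hne.symm
  have hne_one : G.dist v u ≠ 1 := fun h => hnadj (dist_eq_one_iff_adj.mp h)
  calc 2 ≤ G.dist v u := by omega
    _ ≤ eccentricity G v := le_sup (f := fun u => G.dist v u) (mem_univ u)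

theorem connEccIndex_eq_of_forall_eccentricity_eq {k : ℕ} (hk : ∀ v, eccentricity G v = k) :
    connEccIndex G = 2 * numEdges G / k := by
  classical
  rw [connEccIndex]
  simp only [hk, ← sum_div]
  congr 1
  exact_mod_cast sum_degrees_eq_two_mul_numEdges G

end General

namespace joinGraph

variable {V W : Type*} {G : SimpleGraph V} {H : SimpleGraph W}

@[simp] theorem adj_inl_inl {a b : V} : (joinGraph G H).Adj (.inl a) (.inl b) ↔ G.Adj a b :=
  Iff.rfl

@[simp] theorem adj_inr_inr {a b : W} : (joinGraph G H).Adj (.inr a) (.inr b) ↔ H.Adj a b :=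
  Iff.rfl

@[simp] theorem adj_inl_inr (a : V) (b : W) : (joinGraph G H).Adj (.inl a) (.inr b) := trivial

@[simp] theorem adj_inr_inl (a : W) (b : V) : (joinGraph G H).Adj (.inr a) (.inl b) := trivial

theorem isWellConnected_inl_iff {a : V} :
    IsWellConnected (joinGraph G H) (.inl a) ↔ IsWellConnected G a := by
  simp [IsWellConnected, Sum.forall]

theorem isWellConnected_inr_iff {a : W} :
    IsWellConnected (joinGraph G H) (.inr a) ↔ IsWellConnected H a := by
  simp [IsWellConnected, Sum.forall]

theorem exists_walk_length_le_two [Nonempty V] [Nonempty W] (x y : V ⊕ W) :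
    ∃ p : (joinGraph G H).Walk x y, p.length ≤ 2 := by
  obtain ⟨v⟩ := ‹Nonempty V›
  obtain ⟨w⟩ := ‹Nonempty W›
  rcases x with a | a <;> rcases y with b | b
  · exact ⟨.cons (adj_inl_inr a w) (.cons (adj_inr_inl w b) .nil), by simp⟩
  · exact ⟨.cons (adj_inl_inr a b) .nil, by simp⟩
  · exact ⟨.cons (adj_inr_inl a b) .nil, by simp⟩
  · exact ⟨.cons (adj_inr_inl a v) (.cons (adj_inl_inr v b) .nil), by simp⟩

theorem eccentricity_eq_two [Fintype V] [Fintype W] [Nonempty V] [Nonempty W] {x : V ⊕ W}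
    (hx : ¬ IsWellConnected (joinGraph G H) x) : eccentricity (joinGraph G H) x = 2 := by
  refine le_antisymm (eccentricity_le_iff.mpr fun y => ?_) (two_le_eccentricity (fun y => ?_) hx)
  · obtain ⟨p, hp⟩ := exists_walk_length_le_two (G := G) (H := H) x y
    exact (dist_le p).trans hp
  · exact ⟨(exists_walk_length_le_two x y).choose⟩

variable [Fintype V] [Fintype W]

theorem degree_inl [DecidableRel G.Adj] [DecidableRel (joinGraph G H).Adj] (a : V) :
    (joinGraph G H).degree (.inl a) = G.degree a + Fintype.card W := by
  classical
  have hnbr : (joinGraph G H).neighborFinset (.inl a) =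
      (G.neighborFinset a).map .inl ∪ univ.map .inr := by
    ext x
    cases x <;> simp
  rw [← card_neighborFinset_eq_degree, hnbr, card_union_of_disjoint (by simp [Finset.disjoint_left]),
    card_map, card_map, card_univ, card_neighborFinset_eq_degree]

theorem degree_inr [DecidableRel H.Adj] [DecidableRel (joinGraph G H).Adj] (a : W) :
    (joinGraph G H).degree (.inr a) = H.degree a + Fintype.card V := by
  classical
  have hnbr : (joinGraph G H).neighborFinset (.inr a) =
      (H.neighborFinset a).map .inr ∪ univ.map .inl := by
    ext x
    cases x <;> simp
  rw [← card_neighborFinset_eq_degree, hnbr, card_union_of_disjoint (by simp [Finset.disjoint_left]),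
    card_map, card_map, card_univ, card_neighborFinset_eq_degree]

theorem numEdges_eq :
    numEdges (joinGraph G H) = numEdges G + numEdges H + Fintype.card V * Fintype.card W := by
  classical
  have hsum := sum_degrees_eq_two_mul_numEdges (joinGraph G H)
  rw [Fintype.sum_sum_type] at hsum
  simp only [degree_inl, degree_inr, sum_add_distrib, sum_degrees_eq_two_mul_numEdges,
    sum_const, card_univ, smul_eq_mul] at hsum
  linarith

end joinGraph

/-- The connective eccentric index of the join of two graphs without well-connected
vertices equals `|E(G₁)| + |E(G₂)| + |V(G₁)||V(G₂)|`. -/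
theorem connEccIndex_join {V W : Type*} [Fintype V] [Fintype W]
    (G : SimpleGraph V) (H : SimpleGraph W)
    (hV : 2 ≤ Fintype.card V) (hW : 2 ≤ Fintype.card W)
    (hG : ∀ v : V, ¬ IsWellConnected G v) (hH : ∀ w : W, ¬ IsWellConnected H w) :
    connEccIndex (joinGraph G H) =
      (numEdges G : ℚ) + (numEdges H : ℚ) + (Fintype.card V : ℚ) * (Fintype.card W : ℚ) := by
  have : Nonempty V := Fintype.card_pos_iff.mp (by omega)
  have : Nonempty W := Fintype.card_pos_iff.mp (by omega)
  have hecc : ∀ x, eccentricity (joinGraph G H) x = 2 := by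
    rintro (a | a)
    · exact joinGraph.eccentricity_eq_two (joinGraph.isWellConnected_inl_iff.not.mpr (hG a))
    · exact joinGraph.eccentricity_eq_two (joinGraph.isWellConnected_inr_iff.not.mpr (hH a))
  rw [connEccIndex_eq_of_forall_eccentricity_eq hecc, joinGraph.numEdges_eq]
  push_cast
  ring
end

section
/- Let k ≥ 2 and let G₁, G₂, …, G_k be finite simple graphs on pairwise disjoint vertex sets, each having at least two vertices and containing no well-connected vertex. Then C^ξ(G₁ + G₂ + ⋯ + G_k) = ∑_{i=1}^{k} |E(G_i)| + (1/2)·(∑_{i=1}^{k} |V(G_i)|)² − (1/2)·∑_{i=1}^{k} |V(G_i)|². -/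
/-- The join `G₁ + ⋯ + G_k` of a family of graphs on pairwise disjoint vertex sets:
all edges of the `G i`, together with all pairs of vertices lying in two different parts. -/
def multiJoin {ι : Type*} {V : ι → Type*} (G : ∀ i, SimpleGraph (V i)) :
    SimpleGraph (Σ i, V i) where
  Adj x y := x.1 ≠ y.1 ∨ ∃ h : x.1 = y.1, (G y.1).Adj (h ▸ x.2) y.2
  symm := by
    constructor
    rintro ⟨i, u⟩ ⟨j, v⟩ h
    dsimp only at h ⊢
    rcases h with hne | ⟨rfl, hadj⟩
    · exact Or.inl hne.symm
    · exact Or.inr ⟨rfl, (G i).symm.symm _ _ hadj⟩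
  loopless := by
    constructor
    rintro ⟨i, u⟩ h
    dsimp only at h
    rcases h with hne | ⟨h, hadj⟩
    · exact hne rfl
    · exact (G i).loopless.irrefl u hadj

/-!
Every vertex of the join has eccentricity 2: it is adjacent to all vertices outside its own part,
reaches its own part through any other part, and, not being well-connected in its part, has a
non-neighbour there at distance exactly 2. Hence `C^ξ` is half the degree sum, i.e. the number of
edges of the join; a vertex of `G i` has `n - nᵢ` neighbours outside its part, so the join has
`∑ |E(G i)| + (n² - ∑ nᵢ²) / 2` edges.
-/

open Finset SimpleGraph

section eccentricity

variable {V : Type*} [Fintype V] {G : SimpleGraph V}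

lemma numEdges_eq_card_edgeFinset_s9 [DecidableRel G.Adj] : numEdges G = #G.edgeFinset := by
  rw [numEdges, ← coe_edgeFinset, Set.ncard_coe_finset]

lemma eccentricity_eq_two {v : V} (hwalk : ∀ u, ∃ p : G.Walk v u, p.length ≤ 2)
    (hv : ¬ IsWellConnected G v) : eccentricity G v = 2 := by
  obtain ⟨u, hne, hnadj⟩ : ∃ u, u ≠ v ∧ ¬ G.Adj v u := by
    simpa [IsWellConnected] using hv
  obtain ⟨p, -⟩ := hwalk u
  have hne_zero : G.dist v u ≠ 0 := by
    rw [Ne, p.reachable.dist_eq_zero_iff]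
    exact hne.symm
  have hne_one : G.dist v u ≠ 1 := mt dist_eq_one_iff_adj.mp hnadj
  refine le_antisymm (Finset.sup_le fun w _ => ?_) ?_
  · obtain ⟨q, hq⟩ := hwalk w
    exact (dist_le q).trans hq
  · calc 2 ≤ G.dist v u := by omega
      _ ≤ eccentricity G v := le_sup (f := G.dist v) (mem_univ u)

lemma connEccIndex_eq_numEdges (hecc : ∀ v, eccentricity G v = 2) :
    connEccIndex G = numEdges G := by
  classical
  rw [connEccIndex, numEdges_eq_card_edgeFinset_s9]
  simp only [hecc, Nat.cast_ofNat, ← sum_div]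
  rw [← Nat.cast_sum, sum_degrees_eq_twice_card_edges]
  push_cast
  ring

end eccentricity

section multiJoin

variable {ι : Type*} {V : ι → Type*} {G : ∀ i, SimpleGraph (V i)}

lemma multiJoin_adj_mk_iff {i : ι} {v w : V i} :
    (multiJoin G).Adj ⟨i, v⟩ ⟨i, w⟩ ↔ (G i).Adj v w :=
  ⟨fun h => h.resolve_left (· rfl) |>.elim fun _ h => h, fun h => Or.inr ⟨rfl, h⟩⟩

lemma multiJoin_adj_of_ne {i j : ι} (h : i ≠ j) (v : V i) (w : V j) :
    (multiJoin G).Adj ⟨i, v⟩ ⟨j, w⟩ := Or.inl h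

lemma IsWellConnected.of_multiJoin {i : ι} {v : V i}
    (h : IsWellConnected (multiJoin G) ⟨i, v⟩) : IsWellConnected (G i) v := fun u hu =>
  multiJoin_adj_mk_iff.mp (h ⟨i, u⟩ fun h => hu (sigma_mk_injective h))

lemma multiJoin_exists_walk_length_le_two {x : Σ i, V i} (hx : ∃ j ≠ x.1, Nonempty (V j))
    (y : Σ i, V i) : ∃ p : (multiJoin G).Walk x y, p.length ≤ 2 := by
  by_cases hxy : x.1 = y.1
  · obtain ⟨j, hj, ⟨w⟩⟩ := hx
    have hxw : (multiJoin G).Adj x ⟨j, w⟩ := multiJoin_adj_of_ne hj.symm x.2 w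
    have hwy : (multiJoin G).Adj ⟨j, w⟩ y := multiJoin_adj_of_ne (hxy ▸ hj) w y.2
    exact ⟨.cons hxw (.cons hwy .nil), by simp⟩
  · exact ⟨.cons (multiJoin_adj_of_ne hxy x.2 y.2) .nil, by simp⟩

variable [Fintype ι] [∀ i, Fintype (V i)]

lemma multiJoin_degree_add_card [DecidableRel (multiJoin G).Adj] (i : ι) (v : V i)
    [DecidableRel (G i).Adj] :
    (multiJoin G).degree ⟨i, v⟩ + Fintype.card (V i)
      = (G i).degree v + Fintype.card (Σ j, V j) := by
  classical
  have hcount (j : ι) : #{w : V j | (multiJoin G).Adj ⟨i, v⟩ ⟨j, w⟩}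
      + (if j = i then Fintype.card (V i) else 0)
        = Fintype.card (V j) + (if j = i then (G i).degree v else 0) := by
    by_cases hj : j = i
    · subst hj
      simp only [multiJoin_adj_mk_iff, if_true, ← neighborFinset_eq_filter,
        card_neighborFinset_eq_degree]
      ring
    · simp [hj, multiJoin_adj_of_ne (Ne.symm hj)]
  have hsum := sum_congr rfl fun j (_ : j ∈ univ) => hcount j
  simp only [sum_add_distrib, sum_ite_eq', mem_univ, if_true, card_filter] at hsum
  rw [← card_neighborFinset_eq_degree, neighborFinset_eq_filter, Fintype.card_sigma,
    ← univ_sigma_univ, card_filter, sum_sigma]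
  omega

lemma two_mul_numEdges_multiJoin :
    2 * numEdges (multiJoin G) + ∑ i, Fintype.card (V i) ^ 2
      = 2 * ∑ i, numEdges (G i) + (∑ i, Fintype.card (V i)) ^ 2 := by
  classical
  have hpart (i : ι) : ∑ v : V i, (multiJoin G).degree ⟨i, v⟩ + Fintype.card (V i) ^ 2
      = 2 * numEdges (G i) + Fintype.card (V i) * ∑ j, Fintype.card (V j) := by
    have hsum := sum_congr rfl fun v (_ : v ∈ univ) => multiJoin_degree_add_card (G := G) i v
    rw [sum_add_distrib, sum_add_distrib, sum_degrees_eq_twice_card_edges,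
      ← numEdges_eq_card_edgeFinset_s9] at hsum
    simpa [Fintype.card_sigma, sq] using hsum
  have hsum := sum_congr rfl fun i (_ : i ∈ univ) => hpart i
  rw [sum_add_distrib, sum_add_distrib, ← mul_sum, ← sum_mul] at hsum
  rw [numEdges_eq_card_edgeFinset_s9, ← sum_degrees_eq_twice_card_edges, Fintype.sum_sigma]
  simpa [sq] using hsum

end multiJoin

/-- The connective eccentric index of the join of `k` graphs, none containing
well-connected vertices, equals
`∑ |E(G_i)| + (1/2)(∑ |V(G_i)|)² − (1/2)∑ |V(G_i)|²`. -/
theorem connEccIndex_multiJoin {k : ℕ} (hk : 2 ≤ k) (V : Fin k → Type*)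
    [∀ i, Fintype (V i)] (G : ∀ i, SimpleGraph (V i))
    (hcard : ∀ i, 2 ≤ Fintype.card (V i))
    (hwc : ∀ i, ∀ v : V i, ¬ IsWellConnected (G i) v) :
    connEccIndex (multiJoin G) =
      (∑ i, (numEdges (G i) : ℚ))
        + (1 / 2) * (∑ i, (Fintype.card (V i) : ℚ)) ^ 2
        - (1 / 2) * ∑ i, (Fintype.card (V i) : ℚ) ^ 2 := by
  have hother (i : Fin k) : ∃ j ≠ i, Nonempty (V j) := by
    have : Nontrivial (Fin k) := Fin.nontrivial_iff_two_le.mpr hk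
    obtain ⟨j, hj⟩ := exists_ne i
    exact ⟨j, hj, Fintype.card_pos_iff.mp (by linarith [hcard j])⟩
  have hecc (x : Σ i, V i) : eccentricity (multiJoin G) x = 2 :=
    eccentricity_eq_two (multiJoin_exists_walk_length_le_two (hother x.1))
      fun h => hwc x.1 x.2 h.of_multiJoin
  rw [connEccIndex_eq_numEdges hecc]
  have h := congrArg (Nat.cast : ℕ → ℚ) (two_mul_numEdges_multiJoin (G := G))
  push_cast at h
  linear_combination h / 2
end

section
/- Let G₁ and G₂ be finite connected simple graphs, each having at least two vertices and containing no well-connected vertex. Then the connective eccentric index of the disjunction G₁ ∨ G₂ equals |E(G₁)|·|V(G₂)|² + |E(G₂)|·|V(G₁)|² − 2·|E(G₁)|·|E(G₂)|. -/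
/-- The disjunction `G₁ ∨ G₂`: vertex set `V(G₁) × V(G₂)`, where `(u₁,u₂)` is adjacent
to `(v₁,v₂)` iff `u₁ ~ v₁` in `G₁` or `u₂ ~ v₂` in `G₂`. -/
def disjunctionGraph {V W : Type*} (G : SimpleGraph V) (H : SimpleGraph W) :
    SimpleGraph (V × W) where
  Adj x y := G.Adj x.1 y.1 ∨ H.Adj x.2 y.2
  symm := by
    constructor
    intro x y h
    exact h.imp (fun h1 => G.symm.symm _ _ h1) (fun h2 => H.symm.symm _ _ h2)
  loopless := by
    constructor
    intro x h
    rcases h with h1 | h2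
    · exact G.loopless.irrefl _ h1
    · exact H.loopless.irrefl _ h2

/-! In `G ∨ H` any two vertices `x, y` have the common neighbour `(a, b)` for any `a ~ x.1` and
`b ~ y.2`, and such neighbours exist because a connected graph without well-connected vertices has
no isolated vertex. On the other hand `(u, w)` is not adjacent to `(u', w)` when `u' ≠ u` is not
adjacent to `u`. Hence every eccentricity equals 2 and the index is half the degree sum, i.e. the
number of edges. By inclusion–exclusion on neighbourhoods,
`deg (u, w) = deg u * |W| + |V| * deg w - deg u * deg w`, and summing gives the formula. -/

open Finset SimpleGraph

namespace SimpleGraph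

variable {V W : Type*}

lemma exists_adj_of_not_isWellConnected {G : SimpleGraph V} (hconn : G.Connected) {v : V}
    (hv : ¬ IsWellConnected G v) : ∃ a, G.Adj v a := by
  obtain ⟨u, hne, -⟩ : ∃ u, u ≠ v ∧ ¬ G.Adj v u := by simpa [IsWellConnected] using hv
  obtain ⟨p⟩ := hconn v u
  exact ⟨_, p.adj_snd (p.not_nil_of_ne hne.symm)⟩

lemma eccentricity_eq_two_of_commonNeighbors_nonempty [Fintype V] {G : SimpleGraph V}
    (hcommon : ∀ x y, (G.commonNeighbors x y).Nonempty) {x : V}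
    (hx : ¬ IsWellConnected G x) : eccentricity G x = 2 := by
  have hwalk : ∀ y, ∃ p : G.Walk x y, p.length = 2 := fun y => by
    obtain ⟨z, hxz, hzy⟩ := hcommon x y
    exact ⟨.cons hxz (.cons hzy.symm .nil), rfl⟩
  obtain ⟨y, hne, hnadj⟩ : ∃ y, y ≠ x ∧ ¬ G.Adj x y := by simpa [IsWellConnected] using hx
  obtain ⟨p, -⟩ := hwalk y
  refine le_antisymm (Finset.sup_le fun z _ => ?_) ?_
  · obtain ⟨q, hq⟩ := hwalk z
    exact hq ▸ dist_le q
  · exact (p.reachable.one_lt_dist_of_ne_of_not_adj hne.symm hnadj).trans_le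
      (Finset.le_sup (f := G.dist x) (Finset.mem_univ y))

lemma disjunctionGraph_commonNeighbors_nonempty {G : SimpleGraph V} {H : SimpleGraph W}
    (hG : ∀ u, ∃ a, G.Adj u a) (hH : ∀ w, ∃ b, H.Adj w b) (x y : V × W) :
    ((disjunctionGraph G H).commonNeighbors x y).Nonempty := by
  obtain ⟨a, ha⟩ := hG x.1
  obtain ⟨b, hb⟩ := hH y.2
  exact ⟨(a, b), Or.inl ha, Or.inr hb⟩

lemma not_isWellConnected_disjunctionGraph {G : SimpleGraph V} (H : SimpleGraph W) {x : V × W}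
    (hx : ¬ IsWellConnected G x.1) : ¬ IsWellConnected (disjunctionGraph G H) x := by
  obtain ⟨u, hne, hnadj⟩ : ∃ u, u ≠ x.1 ∧ ¬ G.Adj x.1 u := by simpa [IsWellConnected] using hx
  intro hwc
  rcases hwc (u, x.2) (fun h => hne (congrArg Prod.fst h)) with h | h
  · exact hnadj h
  · exact H.loopless.irrefl _ h

section Degree

variable [Fintype V] [Fintype W] (G : SimpleGraph V) (H : SimpleGraph W)
  [DecidableRel G.Adj] [DecidableRel H.Adj] [DecidableRel (disjunctionGraph G H).Adj]

lemma neighborFinset_disjunctionGraph [DecidableEq V] [DecidableEq W] (u : V) (w : W) :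
    (disjunctionGraph G H).neighborFinset (u, w) =
      G.neighborFinset u ×ˢ univ ∪ univ ×ˢ H.neighborFinset w := by
  ext y
  simp only [mem_neighborFinset, mem_union, mem_product, mem_univ, and_true, true_and]
  rfl

lemma degree_disjunctionGraph {R : Type*} [CommRing R] (u : V) (w : W) :
    ((disjunctionGraph G H).degree (u, w) : R) =
      G.degree u * Fintype.card W + Fintype.card V * H.degree w - G.degree u * H.degree w := by
  classical
  have h := card_union_add_card_inter (G.neighborFinset u ×ˢ (univ : Finset W))
    ((univ : Finset V) ×ˢ H.neighborFinset w)
  rw [product_inter_product, inter_univ, univ_inter, ← neighborFinset_disjunctionGraph] at h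
  simp only [card_product, card_neighborFinset_eq_degree, card_univ] at h
  rw [eq_sub_iff_add_eq]
  exact_mod_cast congrArg (Nat.cast : ℕ → R) h

lemma sum_degrees_eq_two_mul_numEdges : ∑ v, G.degree v = 2 * numEdges G := by
  rw [sum_degrees_eq_twice_card_edges, numEdges, ← coe_edgeFinset, Set.ncard_coe_finset]

lemma sum_degrees_disjunctionGraph :
    ∑ x, ((disjunctionGraph G H).degree x : ℚ) =
      2 * (numEdges G * Fintype.card W ^ 2 + numEdges H * Fintype.card V ^ 2
        - 2 * numEdges G * numEdges H) := by
  have hG : ∑ v, (G.degree v : ℚ) = 2 * numEdges G := by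
    exact_mod_cast sum_degrees_eq_two_mul_numEdges G
  have hH : ∑ w, (H.degree w : ℚ) = 2 * numEdges H := by
    exact_mod_cast sum_degrees_eq_two_mul_numEdges H
  rw [Fintype.sum_prod_type]
  simp only [degree_disjunctionGraph, sum_sub_distrib, sum_add_distrib, sum_const, card_univ,
    nsmul_eq_mul, ← mul_sum, ← sum_mul, hG, hH]
  ring

end Degree

lemma connEccIndex_eq_sum_degree_div_two [Fintype V] (G : SimpleGraph V) [DecidableRel G.Adj]
    (hecc : ∀ v, eccentricity G v = 2) : connEccIndex G = (∑ v, (G.degree v : ℚ)) / 2 := by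
  rw [connEccIndex, sum_div]
  congr! with v
  exact_mod_cast hecc v

end SimpleGraph

theorem connEccIndex_disjunction_general {V W : Type*} [Fintype V] [Fintype W]
    (G : SimpleGraph V) (H : SimpleGraph W)
    (hGconn : G.Connected) (hHconn : H.Connected)
    (hG : ∀ v : V, ¬ IsWellConnected G v) (hH : ∀ w : W, ¬ IsWellConnected H w) :
    connEccIndex (disjunctionGraph G H) =
      (numEdges G : ℚ) * (Fintype.card W : ℚ) ^ 2
        + (numEdges H : ℚ) * (Fintype.card V : ℚ) ^ 2
        - 2 * (numEdges G : ℚ) * (numEdges H : ℚ) := by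
  classical
  have hcommon := disjunctionGraph_commonNeighbors_nonempty
    (fun v => exists_adj_of_not_isWellConnected hGconn (hG v))
    (fun w => exists_adj_of_not_isWellConnected hHconn (hH w))
  have hecc : ∀ x, eccentricity (disjunctionGraph G H) x = 2 := fun x =>
    eccentricity_eq_two_of_commonNeighbors_nonempty hcommon
      (not_isWellConnected_disjunctionGraph H (hG x.1))
  rw [connEccIndex_eq_sum_degree_div_two _ hecc, sum_degrees_disjunctionGraph]
  ring

/-- The connective eccentric index of the disjunction of two connected graphs without
well-connected vertices equals
`|E(G₁)||V(G₂)|² + |E(G₂)||V(G₁)|² − 2|E(G₁)||E(G₂)|`. -/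
theorem connEccIndex_disjunction {V W : Type*} [Fintype V] [Fintype W]
    (G : SimpleGraph V) (H : SimpleGraph W)
    (hGconn : G.Connected) (hHconn : H.Connected)
    (hV : 2 ≤ Fintype.card V) (hW : 2 ≤ Fintype.card W)
    (hG : ∀ v : V, ¬ IsWellConnected G v) (hH : ∀ w : W, ¬ IsWellConnected H w) :
    connEccIndex (disjunctionGraph G H) =
      (numEdges G : ℚ) * (Fintype.card W : ℚ) ^ 2
        + (numEdges H : ℚ) * (Fintype.card V : ℚ) ^ 2
        - 2 * (numEdges G : ℚ) * (numEdges H : ℚ) :=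
  connEccIndex_disjunction_general G H hGconn hHconn hG hH
end
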